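/- arXiv:1507.06187 — 2 statements merged into one kernel-verified Lean document; each statement's English description precedes it below -/
import Mathlib

section
/- Let G = (V,E) be a graph, A a countably infinite subset of V such that for every finite F ⊆ A the common neighborhood N_G[F] = ⋂_{v∈F} N_G(v) is infinite. Then for any edge colouring c : E → r with r finite, there exists a partition V = V_0 ∪ ... ∪ V_{r-1} and a colour i_c < r such that for every i < r and every finite set F ⊆ A ∩ V_i, the set N_G[F, i] ∩ V_{i_c} is infinite, where N_G[F, i] = ⋂_{v∈F} {w : {v,w} ∈ E, c(v,w) = i}. -/
open Cardinal

universe u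

variable {V : Type u}

/-- Two walks between the same endpoints intersect only in the endpoints. -/
def IntDisjoint {G : SimpleGraph V} {v w : V} (p q : G.Walk v w) : Prop :=
  ∀ x, x ∈ p.support → x ∈ q.support → x = v ∨ x = w

/-- `A` is κ-unseparable in `G`: any two distinct vertices of `A` are joined by
κ-many pairwise internally disjoint finite paths. -/
def Unseparable (G : SimpleGraph V) (A : Set V) (κ : Cardinal.{u}) : Prop :=
  ∀ v ∈ A, ∀ w ∈ A, v ≠ w →
    ∃ P : Set (G.Path v w), κ ≤ #P ∧
      ∀ p ∈ P, ∀ q ∈ P, p ≠ q → IntDisjoint (p : G.Path v w).1 (q : G.Path v w).1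

/-- A path in Rado's sense inside the graph `G`: a set of vertices together with a
well-ordering such that the set of earlier neighbours of each vertex is cofinal below it. -/
structure RadoPath (G : SimpleGraph V) where
  verts : Set V
  lt : verts → verts → Prop
  wo : IsWellOrder verts lt
  cofinal : ∀ v x : verts, lt x v → ∃ w : verts, G.Adj ↑w ↑v ∧ lt w v ∧ ¬ lt w x

/-- The order type of a Rado path. -/
noncomputable def RadoPath.otype {G : SimpleGraph V} (P : RadoPath G) : Ordinal.{u} :=
  @Ordinal.type P.verts P.lt P.wo

/-- `P` is concentrated on `A`: for every limit point `y` of `P` and every `x` below `y`,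
the interval `[x, y)` contains a neighbour of `y` lying in `A`. -/
def RadoPath.ConcentratedOn {G : SimpleGraph V} (P : RadoPath G) (A : Set V) : Prop :=
  ∀ y : P.verts, ((∃ x, P.lt x y) ∧ ∀ x, P.lt x y → ∃ z, P.lt x z ∧ P.lt z y) →
    ∀ x : P.verts, P.lt x y →
      ∃ w : P.verts, (↑w : V) ∈ A ∧ G.Adj ↑w ↑y ∧ ¬ P.lt w x ∧ P.lt w y

/-- The subgraph of `G` consisting of the edges of colour `i`. -/
def colGraph (G : SimpleGraph V) {r : ℕ} (c : Sym2 V → Fin r) (i : Fin r) :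
    SimpleGraph V where
  Adj a b := G.Adj a b ∧ c s(a, b) = i
  symm := by
    constructor
    intro a b h
    refine ⟨h.1.symm, ?_⟩
    rw [Sym2.eq_swap]
    exact h.2
  loopless := by constructor; intro a h; exact (G.ne_of_adj h.1) rfl

/-- The restriction of `G` to the vertices in `S` (as a graph on the same vertex type). -/
def restrictTo (G : SimpleGraph V) (S : Set V) : SimpleGraph V where
  Adj a b := G.Adj a b ∧ a ∈ S ∧ b ∈ S
  symm := by constructor; intro a b h; exact ⟨h.1.symm, h.2.2, h.2.1⟩
  loopless := by constructor; intro a h; exact (G.ne_of_adj h.1) rfl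

/-- The common neighbourhood `N_G[X] = ⋂_{x ∈ X} N_G(x)`. -/
def commonNbhd (G : SimpleGraph V) (X : Set V) : Set V :=
  {v | ∀ x ∈ X, G.Adj x v}

/-- `G` is κ-complete: it has at least κ vertices and every vertex has fewer than κ
non-neighbours. -/
def KComplete (G : SimpleGraph V) (κ : Cardinal.{u}) : Prop :=
  κ ≤ #V ∧ ∀ x : V, #{v : V | ¬ G.Adj x v} < κ

/-- `G` is of type `H_{κ,κ}` with decomposition `(A, B)`. -/
def IsHDecomp (G : SimpleGraph V) (κ : Cardinal.{u}) (A B : Set V) : Prop :=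
  ∃ a b : Ordinal.{u} → V,
    Set.InjOn a (Set.Iio κ.ord) ∧ Set.InjOn b (Set.Iio κ.ord) ∧
    a '' Set.Iio κ.ord = A ∧ b '' Set.Iio κ.ord = B ∧
    ∀ ξ ζ : Ordinal.{u}, ξ ≤ ζ → ζ < κ.ord → G.Adj (a ξ) (b ζ)

/-- `G` is of type `H_{κ,κ}` with main class `A`. -/
def IsHType (G : SimpleGraph V) (κ : Cardinal.{u}) (A : Set V) : Prop :=
  ∃ B : Set V, IsHDecomp G κ A B

/-- A finite family of increasing covers, witnessing that a set is (𝒜,κ)-centered. -/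
structure CenteredWitness (V : Type u) where
  I : Type
  fin : Finite I
  lam : I → Ordinal.{u}
  fam : I → Ordinal.{u} → Set V

/-- An 𝒜-box: the intersection `⋂_{i ∈ I} A^i_{f i}`. -/
def CenteredWitness.Box (𝒜 : CenteredWitness V) (f : 𝒜.I → Ordinal.{u}) : Set V :=
  ⋂ i, 𝒜.fam i (f i)

/-- `A` is (𝒜,κ)-centered in `G`. -/
def IsCentered (G : SimpleGraph V) (A : Set V) (𝒜 : CenteredWitness V)
    (κ : Cardinal.{u}) : Prop :=
  (∀ i, ∀ α β : Ordinal.{u}, α ≤ β → β < 𝒜.lam i → 𝒜.fam i α ⊆ 𝒜.fam i β) ∧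
  (∀ i, A ⊆ ⋃ α ∈ Set.Iio (𝒜.lam i), 𝒜.fam i α) ∧
  (∀ f : 𝒜.I → Ordinal.{u}, (∀ i, f i < 𝒜.lam i) → κ ≤ #(commonNbhd G (𝒜.Box f)))

/-- The set `S` carries a (finite or ω-type) path all of whose edges have colour `i`. -/
def CarriesPath {r : ℕ} (c : Sym2 ℕ → Fin r) (i : Fin r) (S : Set ℕ) : Prop :=
  (∃ l : List ℕ, l.Nodup ∧ (↑l.toFinset : Set ℕ) = S ∧
      l.Chain' (fun a b => c s(a, b) = i)) ∨
  (∃ f : ℕ → ℕ, Function.Injective f ∧ Set.range f = S ∧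
      ∀ n : ℕ, c s(f n, f (n + 1)) = i)

/-!
Extend the cofinite filter together with the sets `N_G[F]`, `F ⊆ A` finite, to an ultrafilter
`U`; all members of `U` are infinite. For `v ∈ A` the neighbourhood `N_G(v) ∈ U` is the finite
union of its colour classes `N_G(v, i)`, so one of them lies in `U`: its colour is the class
`d v` of `v`. The classes `V_i = d⁻¹(i)` cover `V`, so one of them, `V_{ic}`, lies in `U`. For
finite `F ⊆ A ∩ V_i` the set `N_G[F, i] ∩ V_{ic}` is a finite intersection of members of `U`.
-/

open Filter

section Ultrafilter

variable {α ι : Type*}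

theorem Set.Infinite.of_mem_ultrafilter {U : Ultrafilter α} (hU : (U : Filter α) ≤ cofinite)
    {t : Set α} (ht : t ∈ U) : t.Infinite :=
  frequently_cofinite_mem_iff_infinite.1
    ((Eventually.frequently (f := (U : Filter α)) ht).filter_mono hU)

theorem exists_ultrafilter_le_cofinite_of_antitone [SemilatticeSup ι] [Nonempty ι]
    {s : ι → Set α} (hs : Antitone s) (hinf : ∀ i, (s i).Infinite) :
    ∃ U : Ultrafilter α, (U : Filter α) ≤ cofinite ∧ ∀ i, s i ∈ U := by
  let L : Filter α := ⨅ i, cofinite ⊓ 𝓟 (s i)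
  have : L.NeBot := iInf_neBot_of_directed'
    (hs.directed_ge.mono_comp (g := fun t => cofinite ⊓ 𝓟 t) _
      fun _ _ h => inf_le_inf_left _ (principal_mono.2 h))
    fun i => (hinf i).cofinite_inf_principal_neBot
  have hle : ∀ i, (Ultrafilter.of L : Filter α) ≤ cofinite ⊓ 𝓟 (s i) :=
    le_iInf_iff.1 (Ultrafilter.of_le L)
  exact ⟨Ultrafilter.of L, (hle (Classical.arbitrary ι)).trans inf_le_left,
    fun i => le_principal_iff.1 ((hle i).trans inf_le_right)⟩

end Ultrafilter

section CommonNbhd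

variable (G : SimpleGraph V)

theorem commonNbhd_anti {X Y : Set V} (h : X ⊆ Y) : commonNbhd G Y ⊆ commonNbhd G X :=
  fun _ hv x hx => hv x (h hx)

theorem commonNbhd_eq_biInter (X : Set V) : commonNbhd G X = ⋂ x ∈ X, G.neighborSet x := by
  ext; simp [commonNbhd]

theorem commonNbhd_mem_iff {f : Filter V} {X : Set V} (hX : X.Finite) :
    commonNbhd G X ∈ f ↔ ∀ x ∈ X, G.neighborSet x ∈ f := by
  rw [commonNbhd_eq_biInter, biInter_mem hX]

theorem commonNbhd_singleton (v : V) : commonNbhd G {v} = G.neighborSet v := by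
  ext; simp [commonNbhd]

theorem exists_ultrafilter_commonNbhd_mem {A : Set V}
    (hN : ∀ F : Finset V, ↑F ⊆ A → (commonNbhd G ↑F).Infinite) :
    ∃ U : Ultrafilter V, (U : Filter V) ≤ cofinite ∧
      ∀ F : Finset V, ↑F ⊆ A → commonNbhd G ↑F ∈ U := by
  classical
  let s : Finset A → Set V := fun F => commonNbhd G ↑(F.map (Function.Embedding.subtype _))
  have hs : Antitone s := fun F F' h => commonNbhd_anti G (by simpa using h)
  obtain ⟨U, hUcof, hU⟩ := exists_ultrafilter_le_cofinite_of_antitone hs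
    fun F => hN _ (by simp)
  refine ⟨U, hUcof, fun F hF => ?_⟩
  simpa only [s, Finset.subtype_map_of_mem fun _ hx => hF hx] using hU (F.subtype (· ∈ A))

end CommonNbhd

section UltraColour

variable {r : ℕ}

noncomputable def ultraColour (U : Ultrafilter V) (G : SimpleGraph V) (c : Sym2 V → Fin r)
    (v : V) : Fin r :=
  open Classical in
  if h : ∃ i, (colGraph G c i).neighborSet v ∈ U then h.choose else c s(v, v)

theorem neighborSet_ultraColour_mem {U : Ultrafilter V} {G : SimpleGraph V}
    (c : Sym2 V → Fin r) {v : V} (hv : G.neighborSet v ∈ U) :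
    (colGraph G c (ultraColour U G c v)).neighborSet v ∈ U := by
  have h : ∃ i, (colGraph G c i).neighborSet v ∈ U :=
    Ultrafilter.eventually_exists_iff.1 (mem_of_superset hv fun w hw => ⟨_, hw, rfl⟩)
  rw [ultraColour, dif_pos h]
  exact h.choose_spec

end UltraColour

theorem stmt1_general {V : Type} (G : SimpleGraph V) (A : Set V)
    (hN : ∀ F : Finset V, ↑F ⊆ A → (commonNbhd G ↑F).Infinite)
    (r : ℕ) (c : Sym2 V → Fin r) :
    ∃ d : V → Fin r, ∃ ic : Fin r,
      ∀ i : Fin r, ∀ F : Finset V, ↑F ⊆ A ∩ {v | d v = i} →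
        {w | w ∈ commonNbhd (colGraph G c i) ↑F ∧ d w = ic}.Infinite := by
  obtain ⟨U, hUcof, hUN⟩ := exists_ultrafilter_commonNbhd_mem G hN
  obtain ⟨ic, hic⟩ : ∃ ic, ∀ᶠ w in (U : Filter V), ultraColour U G c w = ic :=
    Ultrafilter.eventually_exists_iff.1 (Eventually.of_forall fun w => ⟨_, rfl⟩)
  refine ⟨ultraColour U G c, ic, fun i F hF =>
    Set.Infinite.of_mem_ultrafilter hUcof (inter_mem ?_ hic)⟩
  refine (commonNbhd_mem_iff _ F.finite_toSet).2 fun v hv => ?_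
  have hvN : G.neighborSet v ∈ U := by
    simpa only [Finset.coe_singleton, commonNbhd_singleton] using
      hUN {v} (by simpa using (hF hv).1)
  exact (hF hv).2 ▸ neighborSet_ultraColour_mem c hvN

/-- Lemma on partitioning via an ultrafilter. -/
theorem stmt1 {V : Type} (G : SimpleGraph V) (A : Set V) (hA : A.Countable)
    (hAinf : A.Infinite)
    (hN : ∀ F : Finset V, ↑F ⊆ A → (commonNbhd G ↑F).Infinite)
    (r : ℕ) (hr : 0 < r) (c : Sym2 V → Fin r) :
    ∃ d : V → Fin r, ∃ ic : Fin r,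
      ∀ i : Fin r, ∀ F : Finset V, ↑F ⊆ A ∩ {v | d v = i} →
        {w | w ∈ commonNbhd (colGraph G c i) ↑F ∧ d w = ic}.Infinite :=
  stmt1_general G A hN r c
end

section
/- Let κ be an infinite cardinal with cofinality μ, let λ ≤ μ, let G = (V,E) be a graph of type H_{κ,κ} with decomposition (A,B), let c be an r-edge colouring and I ⊆ r. Suppose that for every subset à ⊆ A of size < λ there is a finite set a ⊆ A \ à with |B \ ⋃{N(x,i) : x ∈ a, i ∈ I}| < κ. Then there is a λ-configuration in colours I inside A: pairwise disjoint finite sets {a_ξ : ξ < λ} ⊆ [A]^{<ω} and distinct vertices {y_ξ : ξ < λ} such that y_ζ ∈ ⋃{N(x,i) : x ∈ a_ξ, i ∈ I} for all ξ ≤ ζ < λ. -/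
open Cardinal

universe u

variable {V : Type u}

/-!
The configuration is built by a recursion of length `λ`. For infinite `λ`, at stage `ζ < λ` the
union of the earlier finite sets `a_ξ` has size `< λ`, so the hypothesis yields a fresh finite
`a_ζ ⊆ A` with `|B \ N(a_ζ)| < κ`. As `ζ < λ ≤ cf κ`, the vertices of `B` outside some `N(a_ξ)`,
`ξ ≤ ζ`, together with the earlier `y_ξ`, are fewer than `κ = |B|`, and `y_ζ` avoids them all.

For finite `λ = n` that union may be too large, so one keeps instead a single vertex `x_k` of
each `a_k`, chosen (by a finite pigeonhole) so that the common neighbourhood of `x_0, …, x_k`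
in `B` still has `κ` elements; the `y`'s are then any `n` distinct vertices of the last one.
-/

open Set

universe v

theorem exists_forall_lt_of_forall_extend {ι : Type v} [LinearOrder ι] [WellFoundedLT ι]
    {α : Type*} [Nonempty α] (o : ι) (P : ∀ ζ : ι, (Iio ζ → α) → α → Prop)
    (step : ∀ ζ < o, ∀ f : ι → α, (∀ ξ < ζ, P ξ (fun η => f η) (f ξ)) →
      ∃ x, P ζ (fun η => f η) x) :
    ∃ f : ι → α, ∀ ζ < o, P ζ (fun η => f η) (f ζ) := by
  classical
  let f : ι → α := wellFounded_lt.fix fun ζ rec =>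
    if h : ∃ x, P ζ (fun η => rec η.1 η.2) x then h.choose else Classical.arbitrary α
  have hf : ∀ ζ, f ζ = if h : ∃ x, P ζ (fun η => f η) x then h.choose
      else Classical.arbitrary α := fun ζ => wellFounded_lt.fix_eq _ ζ
  refine ⟨f, fun ζ => ?_⟩
  induction ζ using WellFoundedLT.induction with
  | _ ζ ih =>
    intro hζ
    have hex := step ζ hζ f fun ξ hξ => ih ξ hξ (hξ.trans hζ)
    rw [hf ζ, dif_pos hex]
    exact hex.choose_spec

namespace Cardinal

theorem exists_injOn_mapsTo_of_lift_mk_le {ι : Type v} [Nonempty V] {s : Set ι} {t : Set V}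
    (h : lift.{u} #s ≤ lift.{v} #t) : ∃ f : ι → V, InjOn f s ∧ MapsTo f s t := by
  classical
  obtain ⟨e⟩ := lift_mk_le'.mp h
  refine ⟨fun i => if hi : i ∈ s then e ⟨i, hi⟩ else Classical.arbitrary V, ?_, ?_⟩
  · intro i hi j hj hij
    simp only [dif_pos hi, dif_pos hj, Subtype.coe_inj, e.apply_eq_iff_eq] at hij
    exact congrArg Subtype.val hij
  · intro i hi
    simp only [dif_pos hi]
    exact (e ⟨i, hi⟩).2

theorem sdiff_nonempty_of_mk_lt {s t : Set V} (h : #t < #s) : (s \ t).Nonempty :=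
  sdiff_nonempty.mpr fun hst => (mk_le_mk_of_subset hst).not_gt h

theorem mk_union_lt_of_lt {κ : Cardinal.{u}} (hκ : ℵ₀ ≤ κ) {s t : Set V} (hs : #s < κ)
    (ht : #t < κ) : #↥(s ∪ t) < κ :=
  (mk_union_le s t).trans_lt (add_lt_of_lt hκ hs ht)

theorem mk_iUnion_lt_of_lt_cof {ι : Type v} {κ : Cardinal.{u}} (hκ : ℵ₀ ≤ κ)
    (hι : lift.{u} #ι < lift.{v} κ.ord.cof) (s : ι → Set V) (hs : ∀ i, #(s i) < κ) :
    #(⋃ i, s i) < κ := by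
  rw [← lift_lt.{u, v}]
  have hcof : lift.{u} #ι < (lift.{v} κ).ord.cof := by
    rwa [← lift_ord, ← Ordinal.lift_cof]
  refine (mk_iUnion_le_lift s).trans_lt <|
    mul_lt_of_lt (aleph0_le_lift.mpr hκ) (hcof.trans_le (Ordinal.cof_ord_le _)) ?_
  refine lift_iSup_lt_of_lt_cof_ord ?_ fun i => lift_lt.mpr (hs i)
  rw [lift_umax.{v, u}]
  convert hcof using 3
  exact lift_id'.{v, u} _

theorem mk_iUnion_lt_of_finite {ι : Type v} {lam : Cardinal.{u}} (hlam : ℵ₀ ≤ lam)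
    (hι : lift.{u} #ι < lift.{v} lam) (s : ι → Set V) (hs : ∀ i, (s i).Finite) :
    #(⋃ i, s i) < lam := by
  rcases lt_or_ge #ι ℵ₀ with hfin | hinf
  · have : Finite ι := mk_lt_aleph0_iff.mp hfin
    exact (finite_iUnion hs).lt_aleph0.trans_le hlam
  · rw [← lift_lt.{u, v}]
    calc lift.{v} #(⋃ i, s i) ≤ lift.{u} #ι * ⨆ i, lift.{v} #(s i) := mk_iUnion_le_lift s
      _ ≤ lift.{u} #ι * ℵ₀ := by
          gcongr
          exact ciSup_le' fun i => by simpa using (hs i).lt_aleph0.le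
      _ = lift.{u} #ι := mul_aleph0_eq (aleph0_le_lift.mpr hinf)
      _ < lift.{v} lam := hι

theorem exists_mem_le_mk_inter {κ : Cardinal.{u}} (hκ : ℵ₀ ≤ κ) {T B : Set V} (hTB : T ⊆ B)
    (hT : κ ≤ #T) (N : V → Set V) (a : Finset V) (ha : #↥(B \ ⋃ x ∈ a, N x) < κ) :
    ∃ x ∈ a, κ ≤ #↥(T ∩ N x) := by
  by_contra! hsmall
  have hcover : T ⊆ (B \ ⋃ x ∈ a, N x) ∪ ⋃ x : a, T ∩ N x := by
    intro y hy
    by_cases hya : y ∈ ⋃ x ∈ a, N x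
    · obtain ⟨x, hx, hyx⟩ := mem_iUnion₂.mp hya
      exact Or.inr (mem_iUnion.mpr ⟨⟨x, hx⟩, hy, hyx⟩)
    · exact Or.inl ⟨hTB hy, hya⟩
  have hfin : lift.{u} #a < lift.{u} κ.ord.cof := by
    rw [lift_lt]
    exact (finset_card_lt_aleph0 a).trans_le
      (Ordinal.aleph0_le_cof_iff.mpr (Ordinal.one_lt_cof_iff.mpr (isSuccLimit_ord hκ)))
  refine (mk_le_mk_of_subset hcover).not_gt (hT.trans_lt' ?_)
  exact mk_union_lt_of_lt hκ ha (mk_iUnion_lt_of_lt_cof hκ hfin _ fun x => hsmall x x.2)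

end Cardinal

theorem IsHDecomp.mk_right {G : SimpleGraph V} {κ : Cardinal.{u}} {A B : Set V}
    (hH : IsHDecomp G κ A B) : #B = κ := by
  obtain ⟨-, b, -, hb, -, rfl, -⟩ := hH
  have h := mk_image_eq_of_injOn_lift b (Iio κ.ord) hb
  rw [mk_Iio_ordinal, lift_lift, card_ord] at h
  exact lift_inj.mp h

section Configuration

variable (N : V → Set V) (A B : Set V) (κ : Cardinal.{u})

/-- `N x` stands for the `I`-coloured neighbourhood `⋃_{i ∈ I} N(x, i)`. -/
def IsConfiguration {ι : Type*} [LinearOrder ι] (s : Set ι) (as : ι → Finset V) (ys : ι → V) :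
    Prop :=
  (∀ ξ ∈ s, ↑(as ξ) ⊆ A) ∧ (∀ ξ ∈ s, ∀ ζ ∈ s, ξ < ζ → Disjoint (as ξ) (as ζ)) ∧
    InjOn ys s ∧ ∀ ξ ∈ s, ∀ ζ ∈ s, ξ ≤ ζ → ∃ x ∈ as ξ, ys ζ ∈ N x

/-- Keeping `B \ N(a)` small is what leaves room for all later choices of `y`. -/
structure ExtendsConfiguration {ι : Type*} (prev : ι → Finset V × V) (p : Finset V × V) :
    Prop where
  subset : ↑p.1 ⊆ A
  mk_sdiff_lt : #↥(B \ ⋃ x ∈ p.1, N x) < κ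
  mem : p.2 ∈ ⋃ x ∈ p.1, N x
  disjoint : ∀ i, Disjoint (prev i).1 p.1
  mem_prev : ∀ i, p.2 ∈ ⋃ x ∈ (prev i).1, N x
  ne_prev : ∀ i, (prev i).2 ≠ p.2

variable {N A B κ}

theorem isConfiguration_singleton {ι : Type*} [LinearOrder ι] {s : Set ι} {X T : Set V}
    (hXA : X ⊆ A) (hXT : ∀ x ∈ X, T ⊆ N x) {e g : ι → V} (he : InjOn e s) (heX : MapsTo e s X)
    (hg : InjOn g s) (hgT : MapsTo g s T) : IsConfiguration N A s (fun ξ => {e ξ}) g := by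
  refine ⟨fun ξ hξ => ?_, fun ξ hξ ζ hζ hξζ => ?_, hg, fun ξ hξ ζ hζ _ => ?_⟩
  · simpa using hXA (heX hξ)
  · exact Finset.disjoint_singleton.mpr fun h => hξζ.ne (he hξ hζ h)
  · exact ⟨e ξ, Finset.mem_singleton_self _, hXT _ (heX hξ) (hgT hζ)⟩

theorem isConfiguration_of_forall_extendsConfiguration {ι : Type*} [LinearOrder ι] {o : ι}
    {f : ι → Finset V × V}
    (hf : ∀ ζ < o, ExtendsConfiguration N A B κ (fun ξ : Iio ζ => f ξ) (f ζ)) :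
    IsConfiguration N A (Iio o) (fun ξ => (f ξ).1) (fun ξ => (f ξ).2) := by
  refine ⟨fun ξ hξ => (hf ξ hξ).subset, fun ξ _ ζ hζ hξζ => (hf ζ hζ).disjoint ⟨ξ, hξζ⟩, ?_,
    fun ξ _ ζ hζ hξζ => ?_⟩
  · intro ξ hξ ζ hζ hξζ
    by_contra hne
    rcases lt_or_gt_of_ne hne with hlt | hlt
    · exact (hf ζ hζ).ne_prev ⟨ξ, hlt⟩ hξζ
    · exact (hf ξ hξ).ne_prev ⟨ζ, hlt⟩ hξζ.symm
  · suffices h : (f ζ).2 ∈ ⋃ x ∈ (f ξ).1, N x by simpa using h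
    rcases hξζ.lt_or_eq with hlt | rfl
    · exact (hf ζ hζ).mem_prev ⟨ξ, hlt⟩
    · exact (hf ξ hζ).mem

variable {lam : Cardinal.{u}} (hκ : ℵ₀ ≤ κ) (hB : κ ≤ #B)
  (h : ∀ At : Set V, At ⊆ A → #At < lam →
    ∃ a : Finset V, ↑a ⊆ A \ At ∧ #↥(B \ ⋃ x ∈ a, N x) < κ)
include hκ hB h

theorem exists_extendsConfiguration (hlam : ℵ₀ ≤ lam) (hlamκ : lam ≤ κ.ord.cof) {ι : Type v}
    (hι : lift.{u} #ι < lift.{v} lam) {prev : ι → Finset V × V}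
    (hprev : ∀ i, ↑(prev i).1 ⊆ A ∧ #↥(B \ ⋃ x ∈ (prev i).1, N x) < κ) :
    ∃ p, ExtendsConfiguration N A B κ prev p := by
  obtain ⟨a, haA, haB⟩ := h (⋃ i, ↑(prev i).1) (iUnion_subset fun i => (hprev i).1)
    (mk_iUnion_lt_of_finite hlam hι _ fun i => (prev i).1.finite_toSet)
  have hcof : lift.{u} #ι < lift.{v} κ.ord.cof := hι.trans_le (lift_le.mpr hlamκ)
  have hsingle : ∀ y : V, #({y} : Set V) < κ :=
    fun y => (mk_singleton y).trans_lt (one_lt_aleph0.trans_le hκ)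
  obtain ⟨y, hyB, hy⟩ := sdiff_nonempty_of_mk_lt <| hB.trans_lt' <|
    mk_union_lt_of_lt hκ haB <| mk_iUnion_lt_of_lt_cof hκ hcof
      (fun i => (B \ ⋃ x ∈ (prev i).1, N x) ∪ {(prev i).2})
      fun i => mk_union_lt_of_lt hκ (hprev i).2 (hsingle _)
  have hy' : ∀ i, y ∉ (B \ ⋃ x ∈ (prev i).1, N x) ∪ {(prev i).2} :=
    fun i hi => hy (Or.inr (mem_iUnion.mpr ⟨i, hi⟩))
  exact ⟨(a, y), fun x hx => (haA hx).1, haB, not_not.mp fun hn => hy (Or.inl ⟨hyB, hn⟩),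
    fun i => Finset.disjoint_left.mpr fun x hx hxa => (haA hxa).2 (mem_iUnion.mpr ⟨i, hx⟩),
    fun i => not_not.mp fun hn => hy' i (Or.inl ⟨hyB, hn⟩), fun i he => hy' i (Or.inr he.symm)⟩

theorem exists_isConfiguration_of_aleph0_le [Nonempty V] (hlam : ℵ₀ ≤ lam)
    (hlamκ : lam ≤ κ.ord.cof) : ∃ as ys, IsConfiguration N A (Iio lam.ord) as ys := by
  obtain ⟨f, hf⟩ := exists_forall_lt_of_forall_extend lam.ord
    (fun _ prev p => ExtendsConfiguration N A B κ prev p) fun ζ hζ f hf => by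
      refine exists_extendsConfiguration hκ hB h hlam hlamκ ?_
        fun ξ => ⟨(hf ξ ξ.2).subset, (hf ξ ξ.2).mk_sdiff_lt⟩
      rw [mk_Iio_ordinal, lift_lift, lift_lt]
      exact lt_ord.mp hζ
  exact ⟨_, _, isConfiguration_of_forall_extendsConfiguration hf⟩

theorem exists_finset_card_eq_le_mk_inter_iInter :
    ∀ n : ℕ, (n : Cardinal) ≤ lam →
      ∃ X : Finset V, X.card = n ∧ ↑X ⊆ A ∧ κ ≤ #↥(B ∩ ⋂ x ∈ X, N x)
  | 0, _ => ⟨∅, rfl, by simp, by simpa using hB⟩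
  | n + 1, hn => by
    classical
    obtain ⟨X, rfl, hXA, hX⟩ :=
      exists_finset_card_eq_le_mk_inter_iInter n (le_trans (by norm_cast; omega) hn)
    obtain ⟨a, haA, haB⟩ := h X hXA
      (by simpa using (Nat.cast_lt.mpr (Nat.lt_succ_self _)).trans_le hn)
    obtain ⟨z, hza, hz⟩ := exists_mem_le_mk_inter hκ inter_subset_left hX N a haB
    have hzX : z ∉ X := (haA hza).2
    refine ⟨insert z X, Finset.card_insert_of_notMem hzX, ?_, ?_⟩
    · rw [Finset.coe_insert]
      exact insert_subset (haA hza).1 hXA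
    · rwa [Finset.set_biInter_insert, inter_comm (N z), ← inter_assoc]

theorem exists_isConfiguration_of_lt_aleph0 [Nonempty V] (hlam : lam < ℵ₀) :
    ∃ as ys, IsConfiguration N A (Iio lam.ord) as ys := by
  obtain ⟨n, rfl⟩ := lt_aleph0.mp hlam
  obtain ⟨X, hXcard, hXA, hX⟩ := exists_finset_card_eq_le_mk_inter_iInter hκ hB h n le_rfl
  have hn : lift.{u} #(Iio (n : Cardinal.{u}).ord) = n := by simp [mk_Iio_ordinal]
  obtain ⟨e, he, heX⟩ := exists_injOn_mapsTo_of_lift_mk_le (s := Iio (n : Cardinal).ord)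
    (t := (X : Set V)) (by simp [hXcard])
  obtain ⟨g, hg, hgT⟩ := exists_injOn_mapsTo_of_lift_mk_le (s := Iio (n : Cardinal).ord)
    (t := B ∩ ⋂ x ∈ X, N x) <| by
      rw [hn]
      exact natCast_lt_aleph0.le.trans (aleph0_le_lift.mpr (hκ.trans hX))
  exact ⟨_, g, isConfiguration_singleton hXA
    (fun x hx => inter_subset_right.trans (biInter_subset_of_mem hx)) he heX hg hgT⟩

end Configuration

/-- Existence of a λ-configuration in colours `I`. -/
theorem stmt13 {V : Type u} (G : SimpleGraph V) (κ lam : Cardinal.{u})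
    (hκ : ℵ₀ ≤ κ) (hlam : lam ≤ κ.ord.cof) (A B : Set V)
    (hH : IsHDecomp G κ A B)
    (r : ℕ) (c : Sym2 V → Fin r) (I : Set (Fin r))
    (h : ∀ At : Set V, At ⊆ A → #At < lam → ∃ a : Finset V, ↑a ⊆ A \ At ∧
      #↥(B \ ⋃ x ∈ a, ⋃ i ∈ I, (colGraph G c i).neighborSet x) < κ) :
    ∃ (as : Ordinal.{u} → Finset V) (ys : Ordinal.{u} → V),
      (∀ ξ < lam.ord, ↑(as ξ) ⊆ A) ∧
      (∀ ξ ζ : Ordinal.{u}, ξ < ζ → ζ < lam.ord → Disjoint (as ξ) (as ζ)) ∧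
      Set.InjOn ys (Set.Iio lam.ord) ∧
      (∀ ξ ζ : Ordinal.{u}, ξ ≤ ζ → ζ < lam.ord →
        ∃ x ∈ as ξ, ∃ i ∈ I, (colGraph G c i).Adj x (ys ζ)) := by
  have hB : κ ≤ #B := hH.mk_right.ge
  have : Nonempty V := (mk_ne_zero_iff.mp (aleph0_pos.trans_le (hκ.trans hB)).ne').map (↑)
  obtain ⟨as, ys, hA, hdisj, hinj, hadj⟩ : ∃ as ys, IsConfiguration
      (fun x => ⋃ i ∈ I, (colGraph G c i).neighborSet x) A (Iio lam.ord) as ys := by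
    rcases lt_or_ge lam ℵ₀ with hfin | hinf
    · exact exists_isConfiguration_of_lt_aleph0 hκ hB h hfin
    · exact exists_isConfiguration_of_aleph0_le hκ hB h hinf hlam
  refine ⟨as, ys, hA, fun ξ ζ hξζ hζ => hdisj ξ (hξζ.trans hζ) ζ hζ hξζ, hinj,
    fun ξ ζ hξζ hζ => ?_⟩
  obtain ⟨x, hx, hy⟩ := hadj ξ (hξζ.trans_lt hζ) ζ hζ hξζ
  exact ⟨x, hx, by simpa using hy⟩
end
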